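/- arXiv:2001.07149 — 4 statements merged into one kernel-verified Lean document; each statement's English description precedes it below -/
import Mathlib

section
/- Let L be the Laplacian of the tandem walk: Lf(i,j) = (1/3)(f(i-1,j+1)+f(i+1,j)+f(i,j-1)) - f(i,j). Let v0(i,j) = (i+1)(j+1)(i+j+2) and v1(i,j) = -(1/9)(i+1)(j+1)(i+j+2)(3i^2+3j^2+3ij+9i+9j+38). Then L v1 = c * v0 for some nonzero constant c; in particular L^2 v1 = 0, so v1 is bi-harmonic. -/
/-- Laplacian of the tandem walk on `ℤ²`. -/
noncomputable def tandemLap (f : ℤ → ℤ → ℝ) : ℤ → ℤ → ℝ := fun i j =>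
  (1 / 3) * (f (i - 1) (j + 1) + f (i + 1) j + f i (j - 1)) - f i j

noncomputable def v0 : ℤ → ℤ → ℝ := fun i j =>
  ((i : ℝ) + 1) * ((j : ℝ) + 1) * ((i : ℝ) + (j : ℝ) + 2)

noncomputable def v1 : ℤ → ℤ → ℝ := fun i j =>
  -(1 / 9) * ((i : ℝ) + 1) * ((j : ℝ) + 1) * ((i : ℝ) + (j : ℝ) + 2) *
    (3 * (i : ℝ) ^ 2 + 3 * (j : ℝ) ^ 2 + 3 * (i : ℝ) * (j : ℝ)
      + 9 * (i : ℝ) + 9 * (j : ℝ) + 38)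

lemma lap_v1 (i j : ℤ) : tandemLap v1 i j = (-4/3) * v0 i j := by
  simp only [tandemLap, v1, v0]
  push_cast
  ring

lemma lap_v0 (i j : ℤ) : tandemLap v0 i j = 0 := by
  simp only [tandemLap, v0]
  push_cast
  ring

/-- `L v1 = c v0` for a nonzero constant `c`, and `L² v1 = 0`: `v1` is bi-harmonic. -/
theorem tandem_biharmonic :
    ∃ c : ℝ, c ≠ 0 ∧ (∀ i j : ℤ, tandemLap v1 i j = c * v0 i j) ∧
      (∀ i j : ℤ, tandemLap (tandemLap v1) i j = 0) := by
  refine ⟨-4/3, by norm_num, lap_v1, fun i j => ?_⟩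
  have h : tandemLap v1 = fun i j => (-4/3) * v0 i j := by
    funext a b; exact lap_v1 a b
  rw [h]
  simp only [tandemLap]
  have := lap_v0 i j
  simp only [tandemLap] at this
  linarith
end

section
/- For \lambda, n nonnegative integers with the same parity and \lambda \leq n, the number of nonnegative paths from 0 to \lambda with steps \pm 1 admits the integral representation m(\lambda,n) = (2/\pi) \int_{-\pi/2}^{\pi/2} 2^n (\cos y)^n \sin((\lambda+1)y) \sin(y) dy. -/
open Real

lemma cos_int_base (k : ℕ) (hk : k % 2 = 0) (hk0 : 0 < k) :
    ∫ y in (-(π/2))..(π/2), Real.cos ((k:ℝ) * y) = 0 := by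
  have hkR : (k:ℝ) ≠ 0 := Nat.cast_ne_zero.mpr hk0.ne'
  rw [intervalIntegral.integral_comp_mul_left (fun x => Real.cos x) hkR]
  obtain ⟨m, hm⟩ := Nat.even_iff.mpr hk
  rw [integral_cos]
  have h1 : (k:ℝ) * (π/2) = m * π := by
    have : (k:ℝ) = 2*m := by rw [hm]; push_cast; ring
    rw [this]; ring
  have h2 : (k:ℝ) * (-(π/2)) = -(m * π) := by
    have : (k:ℝ) = 2*m := by rw [hm]; push_cast; ring
    rw [this]; ring
  rw [h1, h2, Real.sin_neg, Real.sin_nat_mul_pi m]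
  simp

lemma key (n : ℕ) : ∀ k : ℕ, (n + k) % 2 = 0 →
    (∫ y in (-(π/2))..(π/2), (2 * Real.cos y)^n * Real.cos ((k:ℝ) * y))
      = π * (n.choose ((n + k) / 2) : ℝ) := by
  induction n with
  | zero =>
    intro k hk
    simp only [pow_zero, one_mul, Nat.zero_add] at *
    rcases Nat.eq_zero_or_pos k with h0 | h0
    · subst h0
      simp only [Nat.cast_zero, zero_mul, Real.cos_zero]
      rw [intervalIntegral.integral_const, smul_eq_mul, mul_one]
      norm_num [Nat.choose]
    · rw [cos_int_base k hk h0]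
      have : (0:ℕ).choose (k/2) = 0 := by
        apply Nat.choose_eq_zero_of_lt; omega
      rw [this]; simp
  | succ n ih =>
    intro k hk
    have hcont : ∀ (j : ℕ), IntervalIntegrable
        (fun y => (2 * Real.cos y)^n * Real.cos ((j:ℝ) * y)) MeasureTheory.volume (-(π/2)) (π/2) := by
      intro j
      apply Continuous.intervalIntegrable
      fun_prop
    have step : ∀ y : ℝ, (2 * Real.cos y)^(n+1) * Real.cos ((k:ℝ) * y)
        = (2 * Real.cos y)^n * Real.cos (((k:ℝ)+1) * y)
          + (2 * Real.cos y)^n * Real.cos (((k:ℝ)-1) * y) := by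
      intro y
      have : Real.cos (((k:ℝ)+1) * y) + Real.cos (((k:ℝ)-1) * y)
          = 2 * Real.cos y * Real.cos ((k:ℝ)*y) := by
        have h1 : ((k:ℝ)+1) * y = (k:ℝ)*y + y := by ring
        have h2 : ((k:ℝ)-1) * y = (k:ℝ)*y - y := by ring
        rw [h1, h2, Real.cos_add, Real.cos_sub]; ring
      calc (2 * Real.cos y)^(n+1) * Real.cos ((k:ℝ) * y)
          = (2 * Real.cos y)^n * (2 * Real.cos y * Real.cos ((k:ℝ)*y)) := by ring
        _ = _ := by rw [← this]; ring
    rcases Nat.eq_zero_or_pos k with h0 | h0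
    · subst h0
      have hpar : n % 2 = 1 := by omega
      have e1 : ∫ y in (-(π/2))..(π/2), (2 * Real.cos y)^(n+1) * Real.cos ((0:ℕ) * y)
          = 2 * ∫ y in (-(π/2))..(π/2), (2 * Real.cos y)^n * Real.cos ((1:ℕ) * y) := by
        rw [← intervalIntegral.integral_const_mul]
        apply intervalIntegral.integral_congr
        intro y _
        have := step y
        push_cast at this ⊢
        rw [this]
        simp [Real.cos_neg]
        ring
      rw [e1, ih 1 (by omega)]
      have : (n+1).choose ((n+1+0)/2) = 2 * n.choose ((n+1)/2) := by
        obtain ⟨m, hm⟩ : ∃ m, n = 2*m+1 := ⟨n/2, by omega⟩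
        subst hm
        have h1 : (2*m+1+1+0)/2 = m+1 := by omega
        have h2 : (2*m+1+1)/2 = m+1 := by omega
        simp only [h1, h2]
        have hsym : (2*m+1).choose m = (2*m+1).choose (m+1) := by
          rw [← Nat.choose_symm (show m+1 ≤ 2*m+1 by omega)]
          congr 1; omega
        rw [show 2*m+1+1 = (2*m+1)+1 from rfl, Nat.choose_succ_succ, hsym, Nat.succ_eq_add_one]
        omega
      rw [this]; push_cast; ring
    · obtain ⟨j, rfl⟩ : ∃ j, k = j + 1 := ⟨k-1, by omega⟩
      have e1 : ∫ y in (-(π/2))..(π/2), (2 * Real.cos y)^(n+1) * Real.cos (((j+1:ℕ):ℝ) * y)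
          = (∫ y in (-(π/2))..(π/2), (2 * Real.cos y)^n * Real.cos (((j+2:ℕ):ℝ) * y))
            + ∫ y in (-(π/2))..(π/2), (2 * Real.cos y)^n * Real.cos (((j:ℕ):ℝ) * y) := by
        rw [← intervalIntegral.integral_add (hcont (j+2)) (hcont j)]
        apply intervalIntegral.integral_congr
        intro y _
        have := step y
        push_cast at this ⊢
        rw [this]
        ring_nf
      rw [e1, ih (j+2) (by omega), ih j (by omega)]
      have : (n+1).choose ((n+1+(j+1))/2) = n.choose ((n+(j+2))/2) + n.choose ((n+j)/2) := by
        have h1 : (n+1+(j+1))/2 = (n+j)/2 + 1 := by omega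
        have h2 : (n+(j+2))/2 = (n+j)/2 + 1 := by omega
        rw [h1, h2, Nat.choose_succ_succ]
        exact Nat.add_comm _ _
      rw [this]; push_cast; ring

/-- Integral representation for the number of nonnegative paths from `0` to `lam`
with `n` steps `±1`. -/
theorem path_count_integral_repr (lam n : ℕ) (hpar : (n + lam) % 2 = 0) (hle : lam ≤ n) :
    ((n.choose ((n + lam) / 2) : ℝ) - (n.choose ((n + lam + 2) / 2) : ℝ))
      = (2 / π) * ∫ y in (-(π / 2))..(π / 2),
          (2 : ℝ) ^ n * (Real.cos y) ^ n * Real.sin (((lam : ℝ) + 1) * y) * Real.sin y := by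
  have hcont : ∀ (j : ℕ), IntervalIntegrable
      (fun y => (2 * Real.cos y)^n * Real.cos ((j:ℝ) * y)) MeasureTheory.volume (-(π/2)) (π/2) := by
    intro j
    apply Continuous.intervalIntegrable
    fun_prop
  have e1 : ∫ y in (-(π/2))..(π/2),
        (2 : ℝ) ^ n * (Real.cos y) ^ n * Real.sin (((lam : ℝ) + 1) * y) * Real.sin y
      = (1/2) * ((∫ y in (-(π/2))..(π/2), (2 * Real.cos y)^n * Real.cos (((lam:ℕ):ℝ) * y))
          - ∫ y in (-(π/2))..(π/2), (2 * Real.cos y)^n * Real.cos (((lam+2:ℕ):ℝ) * y)) := by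
    rw [← intervalIntegral.integral_sub (hcont lam) (hcont (lam+2)),
        ← intervalIntegral.integral_const_mul]
    apply intervalIntegral.integral_congr
    intro y _
    have h2 : Real.cos ((lam:ℝ) * y) - Real.cos (((lam:ℝ)+2) * y)
        = 2 * Real.sin (((lam:ℝ)+1)*y) * Real.sin y := by
      have ha : ((lam:ℝ)) * y = ((lam:ℝ)+1)*y - y := by ring
      have hb : ((lam:ℝ)+2) * y = ((lam:ℝ)+1)*y + y := by ring
      rw [ha, hb, Real.cos_sub, Real.cos_add]; ring
    push_cast
    rw [mul_pow]
    linear_combination -(2:ℝ)^n * (Real.cos y)^n / 2 * h2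
  rw [e1, key n lam hpar, key n (lam+2) (by omega)]
  have hd : (n + (lam+2))/2 = (n + lam + 2)/2 := by omega
  rw [hd]
  have hπ : π ≠ 0 := Real.pi_ne_zero
  field_simp
end

section
/- For j \geq 1 and x,y > 0, the double Laplace transform of the harmonic polynomial f_{2j,j}(u,v) = \sum_{k=0}^{j-1} (-1)^k C(2j,2k+1) v^{2k+1} u^{2j-2k-1} equals (2j)! * ((1/x^2)^j - (-1/y^2)^j) / (x^2 + y^2). -/
/-!
Each monomial separates,
`u ^ n * v ^ m * exp (-(x * u + y * v)) = (u ^ n * exp (-(x * u))) * (v ^ m * exp (-(y * v)))`,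
so its transform is a product of two Gamma integrals, `n ! * m ! / (x ^ (n + 1) * y ^ (m + 1))`.
For `f_{2j,j}` the binomial coefficient cancels against these factorials, leaving
`(2j)! * ∑_{k<j} (-1)^k p^(j-k) q^(k+1)` with `p = 1/x^2`, `q = 1/y^2`: a two-variable
geometric sum, equal to `(p^j - (-q)^j) * p * q / (p + q)`, and `p * q / (p + q) = 1 / (x^2 + y^2)`.
-/

open MeasureTheory Set Real Finset
open scoped Nat

theorem integrableOn_Ioi_pow_mul_exp_neg_mul (n : ℕ) {c : ℝ} (hc : 0 < c) :
    IntegrableOn (fun t : ℝ => t ^ n * exp (-(c * t))) (Ioi 0) := by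
  refine (integrableOn_rpow_mul_exp_neg_mul_rpow (p := 1) (s := n)
    (neg_one_lt_zero.trans_le n.cast_nonneg) zero_lt_one hc).congr_fun (fun t _ => ?_)
    measurableSet_Ioi
  simp only [rpow_one, rpow_natCast, neg_mul]

theorem integral_Ioi_pow_mul_exp_neg_mul (n : ℕ) {c : ℝ} (hc : 0 < c) :
    ∫ t in Ioi (0 : ℝ), t ^ n * exp (-(c * t)) = n ! / c ^ (n + 1) := by
  have hGamma := integral_rpow_mul_exp_neg_mul_Ioi (a := n + 1) (by positivity) hc
  simp only [add_sub_cancel_right, rpow_natCast] at hGamma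
  rw [hGamma, Gamma_nat_eq_factorial, ← Nat.cast_succ, rpow_natCast, one_div_pow,
    one_div_mul_eq_div]

noncomputable def doubleLaplace (f : ℝ → ℝ → ℝ) (x y : ℝ) : ℝ :=
  ∫ u in Ioi (0 : ℝ), ∫ v in Ioi (0 : ℝ), f u v * exp (-(x * u + y * v))

theorem doubleLaplace_sum_monomial {ι : Type*} (s : Finset ι) (a : ι → ℝ) (n m : ι → ℕ)
    {x y : ℝ} (hx : 0 < x) (hy : 0 < y) :
    doubleLaplace (fun u v => ∑ i ∈ s, a i * u ^ n i * v ^ m i) x y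
      = ∑ i ∈ s, a i * ((n i)! * (m i)! / (x ^ (n i + 1) * y ^ (m i + 1))) := by
  have inner : ∀ u : ℝ,
      ∫ v in Ioi (0 : ℝ), (∑ i ∈ s, a i * u ^ n i * v ^ m i) * exp (-(x * u + y * v))
        = ∑ i ∈ s, a i * (m i)! / y ^ (m i + 1) * (u ^ n i * exp (-(x * u))) := by
    intro u
    have separate : ∀ v : ℝ,
        (∑ i ∈ s, a i * u ^ n i * v ^ m i) * exp (-(x * u + y * v))
          = ∑ i ∈ s, a i * u ^ n i * exp (-(x * u)) * (v ^ m i * exp (-(y * v))) := by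
      intro v
      rw [sum_mul]
      refine sum_congr rfl fun i _ => ?_
      rw [neg_add, exp_add]
      ring
    simp only [separate]
    rw [integral_finsetSum _ fun i _ => (integrableOn_Ioi_pow_mul_exp_neg_mul _ hy).const_mul _]
    refine sum_congr rfl fun i _ => ?_
    rw [integral_const_mul, integral_Ioi_pow_mul_exp_neg_mul _ hy]
    ring
  unfold doubleLaplace
  simp only [inner]
  rw [integral_finsetSum _ fun i _ => (integrableOn_Ioi_pow_mul_exp_neg_mul _ hx).const_mul _]
  refine sum_congr rfl fun i _ => ?_
  rw [integral_const_mul, integral_Ioi_pow_mul_exp_neg_mul _ hx]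
  ring

theorem sum_range_neg_one_pow_div_sq_pow (j : ℕ) {x y : ℝ} (hx : x ≠ 0) (hy : y ≠ 0) :
    ∑ k ∈ range j, (-1 : ℝ) ^ k / ((x ^ 2) ^ (j - k) * (y ^ 2) ^ (k + 1))
      = ((1 / x ^ 2) ^ j - (-(1 / y ^ 2)) ^ j) / (x ^ 2 + y ^ 2) := by
  have term : ∀ k ∈ range j, (-1 : ℝ) ^ k / ((x ^ 2) ^ (j - k) * (y ^ 2) ^ (k + 1))
      = -(1 / x ^ 2 * -(1 / y ^ 2)) * ((-(1 / y ^ 2)) ^ k * (1 / x ^ 2) ^ (j - 1 - k)) := by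
    intro k hk
    obtain ⟨l, rfl⟩ : ∃ l, j = k + 1 + l :=
      ⟨j - (k + 1), by rw [Finset.mem_range] at hk; omega⟩
    rw [show k + 1 + l - k = l + 1 by omega, show k + 1 + l - 1 - k = l by omega,
      neg_pow (1 / y ^ 2), one_div_pow, one_div_pow, pow_succ, pow_succ]
    field_simp
    ring
  set a : ℝ := 1 / x ^ 2
  set b : ℝ := -(1 / y ^ 2)
  have hsum : x ^ 2 + y ^ 2 ≠ 0 := by positivity
  have hab : -(a * b) * (x ^ 2 + y ^ 2) = a - b := by
    simp only [a, b]
    field_simp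
    ring
  rw [sum_congr rfl term, ← mul_sum, eq_div_iff hsum]
  linear_combination (∑ k ∈ range j, b ^ k * a ^ (j - 1 - k)) * hab - geom_sum₂_mul b a j

theorem laplace_transform_f2jj_general (j : ℕ) (x y : ℝ) (hx : 0 < x) (hy : 0 < y) :
    (∫ u in Set.Ioi (0 : ℝ), ∫ v in Set.Ioi (0 : ℝ),
        (∑ k ∈ Finset.range j,
            (-1 : ℝ) ^ k * ((2 * j).choose (2 * k + 1) : ℝ) *
              v ^ (2 * k + 1) * u ^ (2 * j - (2 * k + 1)))
          * Real.exp (-(x * u + y * v)))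
      = ((2 * j).factorial : ℝ) * ((1 / x ^ 2) ^ j - (-(1 / y ^ 2)) ^ j) / (x ^ 2 + y ^ 2) := by
  have choose_factorial : ∀ k ∈ range j,
      (-1 : ℝ) ^ k * (2 * j).choose (2 * k + 1)
          * ((2 * j - (2 * k + 1))! * (2 * k + 1)!
            / (x ^ (2 * j - (2 * k + 1) + 1) * y ^ (2 * k + 1 + 1)))
        = (2 * j)! * ((-1 : ℝ) ^ k / ((x ^ 2) ^ (j - k) * (y ^ 2) ^ (k + 1))) := by
    intro k hk
    have hle : 2 * k + 1 ≤ 2 * j := by rw [Finset.mem_range] at hk; omega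
    rw [show 2 * j - (2 * k + 1) + 1 = 2 * (j - k) by omega,
      show 2 * k + 1 + 1 = 2 * (k + 1) by ring, pow_mul, pow_mul,
      ← Nat.choose_mul_factorial_mul_factorial hle]
    push_cast
    ring
  calc _ = doubleLaplace (fun u v => ∑ k ∈ range j,
          (-1 : ℝ) ^ k * (2 * j).choose (2 * k + 1) * u ^ (2 * j - (2 * k + 1)) * v ^ (2 * k + 1))
          x y := by
        unfold doubleLaplace
        simp only [mul_right_comm _ (_ ^ (2 * _ + 1) : ℝ)]
    _ = _ := by
      rw [doubleLaplace_sum_monomial _ _ _ _ hx hy, sum_congr rfl choose_factorial, ← mul_sum,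
        sum_range_neg_one_pow_div_sq_pow j hx.ne' hy.ne', mul_div_assoc]

/-- Double Laplace transform of the harmonic polynomial `f_{2j,j}`. -/
theorem laplace_transform_f2jj (j : ℕ) (hj : 1 ≤ j) (x y : ℝ) (hx : 0 < x) (hy : 0 < y) :
    (∫ u in Set.Ioi (0 : ℝ), ∫ v in Set.Ioi (0 : ℝ),
        (∑ k ∈ Finset.range j,
            (-1 : ℝ) ^ k * ((2 * j).choose (2 * k + 1) : ℝ) *
              v ^ (2 * k + 1) * u ^ (2 * j - (2 * k + 1)))
          * Real.exp (-(x * u + y * v)))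
      = ((2 * j).factorial : ℝ) * ((1 / x ^ 2) ^ j - (-(1 / y ^ 2)) ^ j) / (x ^ 2 + y ^ 2) :=
  laplace_transform_f2jj_general j x y hx hy
end

section
/- For the simple random walk in the quarter plane, the number of n-step excursions from (i,j) to the origin staying in Z_{\geq 0}^2 is q((i,j),0;n) = (i+1)(j+1) n! (n+2)! / (m!(m+i+j+2)!(m+i+1)!(m+j+1)!) whenever m = (n-i-j)/2 is a nonnegative integer, and 0 otherwise; verify that this formula satisfies the recursion q(x,0;n+1) = \sum_{s \in S} q(x+s,0;n) 1_{x+s \in Z_{\geq 0}^2} with q((0,0),0;0)=1, where S = {(1,0),(-1,0),(0,1),(0,-1)}. -/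
/-- Closed formula for the number of `n`-step excursions of the simple random walk from
`(i,j)` to the origin staying in the quarter plane. -/
noncomputable def q (x : ℤ × ℤ) (n : ℕ) : ℚ :=
  if 0 ≤ x.1 ∧ 0 ≤ x.2 ∧ x.1 + x.2 ≤ (n : ℤ) ∧ ((n : ℤ) - x.1 - x.2) % 2 = 0 then
    let a := x.1.toNat
    let b := x.2.toNat
    let m := (((n : ℤ) - x.1 - x.2) / 2).toNat
    ((a + 1) * (b + 1) * n.factorial * (n + 2).factorial : ℚ) /
      ((m.factorial * (m + a + b + 2).factorial * (m + a + 1).factorial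
          * (m + b + 1).factorial : ℕ) : ℚ)
  else 0


noncomputable def Qn (n m a b : ℕ) : ℚ :=
  ((a + 1) * (b + 1) * n.factorial * (n + 2).factorial : ℚ) /
    ((m.factorial * (m + a + b + 2).factorial * (m + a + 1).factorial
        * (m + b + 1).factorial : ℕ) : ℚ)

noncomputable def Kn (n m a b : ℕ) : ℚ :=
  ((n.factorial * (n + 2).factorial : ℕ) : ℚ) /
    ((m.factorial * (m + a + b + 2).factorial * (m + a + 1).factorial
        * (m + b + 1).factorial : ℕ) : ℚ)

lemma cf (k : ℕ) : ((k + 1).factorial : ℚ) = (k + 1) * k.factorial := by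
  rw [Nat.factorial_succ]; push_cast; ring

lemma fne (k : ℕ) : ((k.factorial : ℕ) : ℚ) ≠ 0 := by
  exact_mod_cast k.factorial_ne_zero

lemma L0 (n m a b : ℕ) :
    Qn (n + 1) m a b = ((a + 1) * (b + 1) * (n + 1) * (n + 3) : ℚ) * Kn n m a b := by
  rw [Qn, Kn]
  rw [show n + 1 + 2 = (n + 2) + 1 from rfl, cf, cf]
  push_cast
  have := fne m; have := fne (m + a + b + 2); have := fne (m + a + 1); have := fne (m + b + 1)
  field_simp
  ring

lemma L1 (n m a b : ℕ) :
    Qn n m (a + 1) b = ((a + 2) * (b + 1) * (m + 1) * (m + b + 2) : ℚ) * Kn n (m + 1) a b := by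
  rw [Qn, Kn]
  rw [show m + 1 + a + b + 2 = m + (a + 1) + b + 2 by ring,
      show m + 1 + a + 1 = m + (a + 1) + 1 by ring,
      show m + 1 + b + 1 = (m + b + 1) + 1 by ring,
      Nat.factorial_succ (m + b + 1), Nat.factorial_succ m]
  push_cast
  have := fne m; have := fne (m + (a + 1) + b + 2); have := fne (m + (a + 1) + 1); have := fne (m + b + 1)
  field_simp
  ring

lemma L2 (n m a b : ℕ) :
    Qn n m a b = ((a + 1) * (b + 1) * (m + a + b + 3) * (m + a + 2) : ℚ) * Kn n m (a + 1) b := by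
  rw [Qn, Kn]
  rw [show m + (a + 1) + b + 2 = (m + a + b + 2) + 1 by ring,
      show m + (a + 1) + 1 = (m + a + 1) + 1 by ring,
      Nat.factorial_succ (m + a + b + 2), Nat.factorial_succ (m + a + 1)]
  push_cast
  have := fne m; have := fne (m + a + b + 2); have := fne (m + a + 1); have := fne (m + b + 1)
  field_simp
  ring

lemma L3 (n m a b : ℕ) :
    Qn n m a (b + 1) = ((a + 1) * (b + 2) * (m + 1) * (m + a + 2) : ℚ) * Kn n (m + 1) a b := by
  rw [Qn, Kn]
  rw [show m + 1 + a + b + 2 = m + a + (b + 1) + 2 by ring,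
      show m + 1 + b + 1 = m + (b + 1) + 1 by ring,
      show m + 1 + a + 1 = (m + a + 1) + 1 by ring,
      Nat.factorial_succ (m + a + 1), Nat.factorial_succ m]
  push_cast
  have := fne m; have := fne (m + a + (b + 1) + 2); have := fne (m + a + 1); have := fne (m + (b + 1) + 1)
  field_simp
  ring

lemma L4 (n m a b : ℕ) :
    Qn n m a b = ((a + 1) * (b + 1) * (m + a + b + 3) * (m + b + 2) : ℚ) * Kn n m a (b + 1) := by
  rw [Qn, Kn]
  rw [show m + a + (b + 1) + 2 = (m + a + b + 2) + 1 by ring,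
      show m + (b + 1) + 1 = (m + b + 1) + 1 by ring,
      Nat.factorial_succ (m + a + b + 2), Nat.factorial_succ (m + b + 1)]
  push_cast
  have := fne m; have := fne (m + a + b + 2); have := fne (m + a + 1); have := fne (m + b + 1)
  field_simp
  ring

lemma key_s19 (m a b n : ℕ) (h : n + 1 = 2 * m + a + b) :
    Qn (n + 1) m a b =
      (if m = 0 then 0 else Qn n (m - 1) (a + 1) b) +
      (if a = 0 then 0 else Qn n m (a - 1) b) +
      (if m = 0 then 0 else Qn n (m - 1) a (b + 1)) +
      (if b = 0 then 0 else Qn n m a (b - 1)) := by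
  have h1 : (if m = 0 then (0:ℚ) else Qn n (m - 1) (a + 1) b)
      = ((a + 2) * (b + 1) * m * (m + b + 1) : ℚ) * Kn n m a b := by
    rcases m with _ | M
    · simp
    · rw [if_neg (Nat.succ_ne_zero M), Nat.add_sub_cancel, L1]
      push_cast; ring
  have h2 : (if a = 0 then (0:ℚ) else Qn n m (a - 1) b)
      = ((a : ℚ) * (b + 1) * (m + a + b + 2) * (m + a + 1) : ℚ) * Kn n m a b := by
    rcases a with _ | A
    · simp
    · rw [if_neg (Nat.succ_ne_zero A), Nat.add_sub_cancel, L2]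
      push_cast; ring
  have h3 : (if m = 0 then (0:ℚ) else Qn n (m - 1) a (b + 1))
      = ((a + 1) * (b + 2) * m * (m + a + 1) : ℚ) * Kn n m a b := by
    rcases m with _ | M
    · simp
    · rw [if_neg (Nat.succ_ne_zero M), Nat.add_sub_cancel, L3]
      push_cast; ring
  have h4 : (if b = 0 then (0:ℚ) else Qn n m a (b - 1))
      = ((a + 1) * (b : ℚ) * (m + a + b + 2) * (m + b + 1) : ℚ) * Kn n m a b := by
    rcases b with _ | B
    · simp
    · rw [if_neg (Nat.succ_ne_zero B), Nat.add_sub_cancel, L4]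
      push_cast; ring
  rw [L0, h1, h2, h3, h4, ← add_mul, ← add_mul, ← add_mul]
  congr 1
  have hq : (n : ℚ) + 1 = 2 * m + a + b := by exact_mod_cast congrArg (Nat.cast : ℕ → ℚ) h
  linear_combination ((a : ℚ) + 1) * ((b : ℚ) + 1) * ((n : ℚ) + 1 + (2 * m + a + b) + 2) * hq


lemma q_eq (a b m n : ℕ) (h : n = 2 * m + a + b) : q ((a : ℤ), (b : ℤ)) n = Qn n m a b := by
  have hc : (0:ℤ) ≤ ((a:ℤ), (b:ℤ)).1 ∧ (0:ℤ) ≤ ((a:ℤ), (b:ℤ)).2 ∧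
      ((a:ℤ), (b:ℤ)).1 + ((a:ℤ), (b:ℤ)).2 ≤ (n : ℤ) ∧
      ((n : ℤ) - ((a:ℤ), (b:ℤ)).1 - ((a:ℤ), (b:ℤ)).2) % 2 = 0 := by
    refine ⟨by positivity, by positivity, by omega, by omega⟩
  rw [q, if_pos hc]
  have h1 : ((a:ℤ)).toNat = a := by omega
  have h2 : ((b:ℤ)).toNat = b := by omega
  have hm : (((n:ℤ) - ((a:ℤ), (b:ℤ)).1 - ((a:ℤ), (b:ℤ)).2) / 2).toNat = m := by
    simp only; omega
  simp only [Qn, h1, h2, hm]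

lemma q_zero (a b n : ℕ) (h : ∀ m, n ≠ 2 * m + a + b) : q ((a : ℤ), (b : ℤ)) n = 0 := by
  rw [q, if_neg]
  rintro ⟨-, -, h3, h4⟩
  simp only at h3 h4
  exact h ((((n:ℤ) - a - b) / 2).toNat) (by omega)


/-- The closed formula satisfies the excursion recursion
`q(x,0;n+1) = ∑_{s ∈ S} q(x+s,0;n) 1_{x+s ∈ ℤ₊²}` with `q((0,0),0;0) = 1`. -/
theorem srw_excursion_formula :
    q (0, 0) 0 = 1 ∧
    ∀ (x : ℤ × ℤ) (n : ℕ), 0 ≤ x.1 → 0 ≤ x.2 →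
      q x (n + 1) =
        (if 0 ≤ x.1 + 1 ∧ 0 ≤ x.2 then q (x.1 + 1, x.2) n else 0) +
        (if 0 ≤ x.1 - 1 ∧ 0 ≤ x.2 then q (x.1 - 1, x.2) n else 0) +
        (if 0 ≤ x.1 ∧ 0 ≤ x.2 + 1 then q (x.1, x.2 + 1) n else 0) +
        (if 0 ≤ x.1 ∧ 0 ≤ x.2 - 1 then q (x.1, x.2 - 1) n else 0) := by
  constructor
  · rw [show ((0:ℤ), (0:ℤ)) = (((0:ℕ):ℤ), ((0:ℕ):ℤ)) by norm_num,
        q_eq 0 0 0 0 (by norm_num), Qn]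
    norm_num [Nat.factorial]
  · rintro ⟨x1, x2⟩ n h1 h2
    simp only at h1 h2 ⊢
    obtain ⟨a, rfl⟩ := Int.eq_ofNat_of_zero_le h1
    obtain ⟨b, rfl⟩ := Int.eq_ofNat_of_zero_le h2
    by_cases hpar : ∃ m, n + 1 = 2 * m + a + b
    · obtain ⟨m, hm⟩ := hpar
      rw [q_eq a b m (n + 1) hm]
      have e1 : (if 0 ≤ (a:ℤ) + 1 ∧ 0 ≤ (b:ℤ) then q ((a:ℤ) + 1, (b:ℤ)) n else 0)
          = (if m = 0 then 0 else Qn n (m - 1) (a + 1) b) := by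
        rw [if_pos ⟨by positivity, by positivity⟩,
            show ((a:ℤ) + 1) = ((a + 1 : ℕ) : ℤ) by push_cast; ring]
        rcases m with _ | M
        · rw [if_pos rfl, q_zero (a + 1) b n (by omega)]
        · rw [if_neg (Nat.succ_ne_zero M), Nat.add_sub_cancel,
              q_eq (a + 1) b M n (by omega)]
      have e2 : (if 0 ≤ (a:ℤ) - 1 ∧ 0 ≤ (b:ℤ) then q ((a:ℤ) - 1, (b:ℤ)) n else 0)
          = (if a = 0 then 0 else Qn n m (a - 1) b) := by
        rcases a with _ | A
        · rw [if_neg (by norm_num), if_pos rfl]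
        · rw [if_pos ⟨by push_cast; omega, by positivity⟩,
              show ((A + 1 : ℕ) : ℤ) - 1 = ((A : ℕ) : ℤ) by push_cast; ring,
              if_neg (Nat.succ_ne_zero A), Nat.add_sub_cancel,
              q_eq A b m n (by omega)]
      have e3 : (if 0 ≤ (a:ℤ) ∧ 0 ≤ (b:ℤ) + 1 then q ((a:ℤ), (b:ℤ) + 1) n else 0)
          = (if m = 0 then 0 else Qn n (m - 1) a (b + 1)) := by
        rw [if_pos ⟨by positivity, by positivity⟩,
            show ((b:ℤ) + 1) = ((b + 1 : ℕ) : ℤ) by push_cast; ring]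
        rcases m with _ | M
        · rw [if_pos rfl, q_zero a (b + 1) n (by omega)]
        · rw [if_neg (Nat.succ_ne_zero M), Nat.add_sub_cancel,
              q_eq a (b + 1) M n (by omega)]
      have e4 : (if 0 ≤ (a:ℤ) ∧ 0 ≤ (b:ℤ) - 1 then q ((a:ℤ), (b:ℤ) - 1) n else 0)
          = (if b = 0 then 0 else Qn n m a (b - 1)) := by
        rcases b with _ | B
        · rw [if_neg (by norm_num), if_pos rfl]
        · rw [if_pos ⟨by positivity, by push_cast; omega⟩,
              show ((B + 1 : ℕ) : ℤ) - 1 = ((B : ℕ) : ℤ) by push_cast; ring,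
              if_neg (Nat.succ_ne_zero B), Nat.add_sub_cancel,
              q_eq a B m n (by omega)]
      rw [e1, e2, e3, e4]
      exact key_s19 m a b n hm
    · push_neg at hpar
      rw [q_zero a b (n + 1) hpar]
      have e1 : q ((a:ℤ) + 1, (b:ℤ)) n = 0 := by
        rw [show ((a:ℤ) + 1) = ((a + 1 : ℕ) : ℤ) by push_cast; ring]
        exact q_zero (a + 1) b n (fun m => by have := hpar (m + 1); omega)
      have e3 : q ((a:ℤ), (b:ℤ) + 1) n = 0 := by
        rw [show ((b:ℤ) + 1) = ((b + 1 : ℕ) : ℤ) by push_cast; ring]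
        exact q_zero a (b + 1) n (fun m => by have := hpar (m + 1); omega)
      have e2 : (if 0 ≤ (a:ℤ) - 1 ∧ 0 ≤ (b:ℤ) then q ((a:ℤ) - 1, (b:ℤ)) n else 0) = 0 := by
        rcases a with _ | A
        · rw [if_neg (by norm_num)]
        · rw [if_pos ⟨by push_cast; omega, by positivity⟩,
              show ((A + 1 : ℕ) : ℤ) - 1 = ((A : ℕ) : ℤ) by push_cast; ring]
          exact q_zero A b n (fun m => by have := hpar m; omega)
      have e4 : (if 0 ≤ (a:ℤ) ∧ 0 ≤ (b:ℤ) - 1 then q ((a:ℤ), (b:ℤ) - 1) n else 0) = 0 := by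
        rcases b with _ | B
        · rw [if_neg (by norm_num)]
        · rw [if_pos ⟨by positivity, by push_cast; omega⟩,
              show ((B + 1 : ℕ) : ℤ) - 1 = ((B : ℕ) : ℤ) by push_cast; ring]
          exact q_zero a B n (fun m => by have := hpar m; omega)
      rw [e2, e4, if_pos ⟨by positivity, by positivity⟩, if_pos ⟨by positivity, by positivity⟩,
          e1, e3]
      ring
end
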